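/- arXiv:1602.02195 — 3 statements merged into one kernel-verified Lean document; each statement's English description precedes it below -/
import Mathlib

section
/- If γ_A : A → ∏_{λ∈K} A/(t−λ)A is injective, then γ_B : B → ∏_{λ∈K} B/(t−λ)B is injective, and conversely, where B = A[z;α,δ] is an Ore extension and γ_A, γ_B are the products of canonical projections. -/
/-! Every `b ∈ B` is uniquely `∑ ι(pᵢ) zⁱ`. Since `t - λ` is a central scalar, `b ∈ B (t - λ)`
exactly when every coefficient `pᵢ` lies in `A (t - λ)`; hence `⋂_λ B (t - λ) = 0` if and only if
`⋂_λ A (t - λ) = 0`, and these intersections are the kernels of `γ_B` and `γ_A`. -/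

theorem Submodule.injective_pi_mk_iff_iInf_eq_bot {R M K : Type*} [Ring R] [AddCommGroup M]
    [Module R M] (p : K → Submodule R M) :
    Function.Injective (fun x : M => fun l : K => (Submodule.Quotient.mk x : M ⧸ p l)) ↔
      ⨅ l, p l = ⊥ := by
  change Function.Injective (LinearMap.pi fun l => (p l).mkQ) ↔ _
  rw [← LinearMap.ker_eq_bot, LinearMap.ker_pi]
  simp only [Submodule.ker_mkQ]

section LinearCombinationVia

variable {A B G κ : Type*} [Ring A] [Ring B] [FunLike G A B] (φ : G) (e : κ → B)

def linearCombinationVia (p : κ →₀ A) : B :=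
  p.sum fun i c => φ c * e i

@[simp]
theorem linearCombinationVia_zero : linearCombinationVia φ e (0 : κ →₀ A) = 0 :=
  Finsupp.sum_zero_index

variable [RingHomClass G A B]

theorem linearCombinationVia_mul_of_commute {s : A} (hs : ∀ i, Commute (φ s) (e i))
    (p : κ →₀ A) :
    linearCombinationVia φ e p * φ s =
      linearCombinationVia φ e (p.mapRange (· * s) (zero_mul s)) := by
  rw [linearCombinationVia, linearCombinationVia, Finsupp.sum_mapRange_index (by simp),
    Finsupp.sum_mul]
  refine Finsupp.sum_congr fun i _ => ?_
  rw [map_mul, mul_assoc, mul_assoc, (hs i).eq]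

variable {φ e}

theorem linearCombinationVia_mem_span_singleton_iff
    (hbasis : ∀ b : B, ∃! p : κ →₀ A, b = linearCombinationVia φ e p)
    {s : A} (hs : ∀ i, Commute (φ s) (e i)) (p : κ →₀ A) :
    linearCombinationVia φ e p ∈ Ideal.span {φ s} ↔ ∀ i, p i ∈ Ideal.span {s} := by
  constructor
  · intro hp i
    obtain ⟨x, hx⟩ := Ideal.mem_span_singleton'.mp hp
    obtain ⟨q, rfl, -⟩ := hbasis x
    rw [linearCombinationVia_mul_of_commute φ e hs] at hx
    rw [← (hbasis _).unique rfl hx]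
    exact Ideal.mem_span_singleton'.mpr ⟨q i, rfl⟩
  · intro hp
    refine Submodule.finsuppSum_mem _ _ _ _ fun i _ => ?_
    obtain ⟨a, ha⟩ := Ideal.mem_span_singleton'.mp (hp i)
    refine Ideal.mem_span_singleton'.mpr ⟨φ a * e i, ?_⟩
    rw [← ha, map_mul, mul_assoc, mul_assoc, (hs i).eq]

theorem iInf_span_singleton_map_eq_bot_iff [Nonempty κ]
    (hbasis : ∀ b : B, ∃! p : κ →₀ A, b = linearCombinationVia φ e p)
    {K : Type*} {s : K → A} (hs : ∀ l i, Commute (φ (s l)) (e i)) :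
    ⨅ l, Ideal.span {φ (s l)} = ⊥ ↔ ⨅ l, Ideal.span {s l} = ⊥ := by
  have hinj : Function.Injective (linearCombinationVia φ e) := fun p q h =>
    (hbasis _).unique rfl h
  have hmem (p : κ →₀ A) :
      linearCombinationVia φ e p ∈ ⨅ l, Ideal.span {φ (s l)} ↔
        ∀ i, p i ∈ ⨅ l, Ideal.span {s l} := by
    simp only [Submodule.mem_iInf, linearCombinationVia_mem_span_singleton_iff hbasis (hs _)]
    exact forall_comm
  simp only [Submodule.eq_bot_iff]
  constructor
  · intro hB a ha
    obtain ⟨i⟩ := ‹Nonempty κ›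
    have hsingle : Finsupp.single i a = 0 := hinj <| by
      rw [linearCombinationVia_zero]
      refine hB _ ((hmem _).mpr fun j => ?_)
      obtain rfl | hji := eq_or_ne i j
      · simpa using ha
      · rw [Finsupp.single_eq_of_ne' hji]
        exact zero_mem _
    simpa using hsingle
  · intro hA b hb
    obtain ⟨p, rfl, -⟩ := hbasis b
    have hp : p = 0 := Finsupp.ext fun i => hA _ ((hmem p).mp hb i)
    rw [hp, linearCombinationVia_zero]

end LinearCombinationVia

theorem gammaA_injective_iff_gammaB_injective_general
    (F : Type) [CommRing F] (A : Type) [Ring A] [Algebra F A]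
    (B : Type) [Ring B] [Algebra F B] (ι : A →ₐ[F] B) (z : B)
    -- `B` is a free left `A`-module with basis the powers of `z`:
    (hbasis : ∀ b : B, ∃! p : ℕ →₀ A, b = p.sum fun i c => ι c * z ^ i)
    (t : F) (K : Set F) :
    Function.Injective (fun x : A => fun l : K =>
      (Submodule.Quotient.mk x :
        A ⧸ (Ideal.span {algebraMap F A (t - (l : F))} : Ideal A))) ↔
    Function.Injective (fun b : B => fun l : K =>
      (Submodule.Quotient.mk b :
        B ⧸ (Ideal.span {algebraMap F B (t - (l : F))} : Ideal B))) := by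
  rw [Submodule.injective_pi_mk_iff_iInf_eq_bot, Submodule.injective_pi_mk_iff_iInf_eq_bot]
  simp only [← ι.commutes]
  refine (iInf_span_singleton_map_eq_bot_iff (φ := ι) (e := (z ^ ·)) hbasis fun l i => ?_).symm
  rw [ι.commutes]
  exact Algebra.commute_algebraMap_left _ _

theorem gammaA_injective_iff_gammaB_injective
    (F : Type) [CommRing F] (A : Type) [Ring A] [Algebra F A]
    (B : Type) [Ring B] [Algebra F B] (ι : A →ₐ[F] B) (z : B)
    (α : A ≃ₐ[F] A) (δ : A →ₗ[F] A)
    -- `δ` is a left `α`-derivation: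
    (hδ : ∀ x y : A, δ (x * y) = δ x * y + α x * δ y)
    -- the commutation rule of `B = A[z;α,δ]`:
    (hz : ∀ x : A, z * ι x = ι (α x) * z + ι (δ x))
    -- `B` is a free left `A`-module with basis the powers of `z`:
    (hbasis : ∀ b : B, ∃! p : ℕ →₀ A, b = p.sum fun i c => ι c * z ^ i)
    (t : F) (K : Set F) :
    Function.Injective (fun x : A => fun l : K =>
      (Submodule.Quotient.mk x :
        A ⧸ (Ideal.span {algebraMap F A (t - (l : F))} : Ideal A))) ↔
    Function.Injective (fun b : B => fun l : K =>
      (Submodule.Quotient.mk b :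
        B ⧸ (Ideal.span {algebraMap F B (t - (l : F))} : Ideal B))) :=
  gammaA_injective_iff_gammaB_injective_general F A B ι z hbasis t K
end

section
/- In the skew polynomial ring B = F[h^{±1}][x;α][y;β,δ], where α(h)=th, β(h)=t^{-1}h, β(x)=x, δ(h)=0, δ(x)=a(h)−a(th), the element xy − a(th) is central. -/
/- STATEMENT 5: In the iterated skew polynomial ring
`B = F[h^{±1}][x;α][y;β,δ]` with `F = ℂ[t,t⁻¹]`, `α(h) = th`, `β(h) = t⁻¹h`,
`β(x) = x`, `δ(h) = 0`, `δ(x) = a(h) - a(th)`, the element `xy - a(th)` is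
central.  The ring `B` is presented by its generators `t, t⁻¹, h, h⁻¹, x, y`
and defining relations `xh = thx`, `yh = t⁻¹hy`, `yx = xy + a(h) - a(th)`, with
`t` central, which suffice for the centrality of `xy - a(th)`. -/

noncomputable section
open LaurentPolynomial

/-- Evaluation of a Laurent polynomial `a ∈ ℂ[h^{±1}]` at an invertible element
`u` (with given inverse `u'`) of a not necessarily commutative ℂ-algebra. -/
def nceval {B : Type} [Ring B] [Algebra ℂ B] (u u' : B)
    (a : LaurentPolynomial ℂ) : B :=
  Finsupp.sum a.coeff fun n c =>
    algebraMap ℂ B c * (if 0 ≤ n then u ^ n.toNat else u' ^ (-n).toNat)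

/-! It suffices to check that `z = xy - a(th)` commutes with the six generators. Conjugation by
`x` maps `h ↦ th`, hence `a(h) ↦ a(th)`, and conjugation by `y` maps `th ↦ h`, hence
`a(th) ↦ a(h)`; these two facts are exactly what makes `z` commute with `x` and with `y`
modulo the relation `yx = xy + a(h) - a(th)`. That `z` commutes with `h` comes from `xy` and
`a(th)` both commuting with `h`. -/

theorem SemiconjBy.inv_right_of_mul_eq_one {M : Type*} [Monoid M] {a x x' y y' : M}
    (h : SemiconjBy a x y) (hx : x * x' = 1) (hy : y' * y = 1) : SemiconjBy a x' y' :=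
  calc a * x' = y' * (y * a) * x' := by rw [← mul_assoc, hy, one_mul]
    _ = y' * a := by rw [← h.eq, mul_assoc, mul_assoc, hx, mul_one]

theorem SemiconjBy.nceval {B : Type} [Ring B] [Algebra ℂ B] {b u u' v v' : B}
    (hu : SemiconjBy b u v) (hu' : SemiconjBy b u' v') (a : LaurentPolynomial ℂ) :
    SemiconjBy b (nceval u u' a) (nceval v v' a) := by
  rw [SemiconjBy, _root_.nceval, _root_.nceval, Finsupp.mul_sum, Finsupp.sum_mul]
  refine Finsupp.sum_congr fun n _ =>
    SemiconjBy.mul_right (Algebra.commute_algebraMap_right (R := ℂ) _ b) ?_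
  split_ifs
  exacts [hu.pow_right _, hu'.pow_right _]

section

variable {R : Type*} [Ring R] {x y c d : R}

theorem commute_mul_sub_left (hyx : y * x = x * y + c - d) (hxc : SemiconjBy x c d) :
    Commute (x * y - d) x := by
  rw [Commute, SemiconjBy, sub_mul, mul_assoc, hyx, mul_sub, mul_sub, mul_add, hxc.eq]
  abel

theorem commute_mul_sub_right (hyx : y * x = x * y + c - d) (hyd : SemiconjBy y d c) :
    Commute (x * y - d) y := by
  rw [Commute, SemiconjBy, sub_mul, mul_sub, ← mul_assoc y, hyx, hyd.eq, sub_mul, add_mul]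
  abel

end

theorem xy_sub_a_th_central_general
    (a : LaurentPolynomial ℂ)
    (B : Type) [Ring B] [Algebra ℂ B] (t t' h h' x y : B)
    -- `t` and `h` are invertible:
    (htt' : t * t' = 1) (ht't : t' * t = 1)
    (hhh' : h * h' = 1) (hh'h : h' * h = 1)
    -- `t` is central:
    (htc : ∀ b : B, t * b = b * t)
    -- the defining relations of `B = F[h^{±1}][x;α][y;β,δ]`:
    (hxh : x * h = t * h * x)
    (hyh : y * h = t' * h * y)
    (hyx : y * x = x * y + nceval h h' a - nceval (t * h) (t' * h') a)
    -- `B` is generated by `t, t⁻¹, h, h⁻¹, x, y`: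
    (hgen : Algebra.adjoin ℂ ({t, t', h, h', x, y} : Set B) = ⊤) :
    ∀ b : B, Commute (x * y - nceval (t * h) (t' * h') a) b := by
  have htc (b : B) : Commute t b := htc b
  have hxh : SemiconjBy x h (t * h) := hxh
  have hyh : SemiconjBy y h (t' * h) := hyh
  have ht'c (b : B) : Commute t' b := ((htc b).symm.inv_right_of_mul_eq_one htt' ht't).symm
  have hth : t * h * (t' * h') = 1 := by
    rw [(ht'c h).symm.mul_mul_mul_comm, htt', hhh', one_mul]
  have hth' : t' * h' * (t * h) = 1 := by
    rw [(htc h').symm.mul_mul_mul_comm, ht't, hh'h, one_mul]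
  have hxh' : SemiconjBy x h' (t' * h') := hxh.inv_right_of_mul_eq_one hhh' hth'
  have hyth : SemiconjBy y (t * h) h := by
    rw [SemiconjBy, ← mul_assoc, ← (htc y).eq, mul_assoc, hyh.eq, ← mul_assoc, ← mul_assoc, htt',
      one_mul]
  have hyth' : SemiconjBy y (t' * h') h' := hyth.inv_right_of_mul_eq_one hth hh'h
  have hxth : SemiconjBy x (t' * h) h := by
    rw [SemiconjBy, ← mul_assoc, ← (ht'c x).eq, mul_assoc, hxh.eq, ← mul_assoc, ← mul_assoc, ht't,
      one_mul]
  have hzh : Commute (x * y - nceval (t * h) (t' * h') a) h :=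
    (hxth.mul_left hyh).sub_left <| Commute.symm <|
      ((htc h).symm.mul_right (Commute.refl h)).nceval
        ((ht'c h).symm.mul_right (hhh'.trans hh'h.symm)) a
  intro b
  refine Algebra.commute_of_mem_adjoin_of_forall_mem_commute (hgen ▸ Algebra.mem_top) ?_
  simp only [Set.mem_insert_iff, Set.mem_singleton_iff, forall_eq_or_imp, forall_eq]
  exact ⟨(htc _).symm, (ht'c _).symm, hzh, hzh.inv_right_of_mul_eq_one hhh' hh'h,
    commute_mul_sub_left hyx (hxh.nceval hxh' a), commute_mul_sub_right hyx (hyth.nceval hyth' a)⟩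

theorem xy_sub_a_th_central
    (a : LaurentPolynomial ℂ) (ha : a ≠ 0)
    (B : Type) [Ring B] [Algebra ℂ B] (t t' h h' x y : B)
    -- `t` and `h` are invertible:
    (htt' : t * t' = 1) (ht't : t' * t = 1)
    (hhh' : h * h' = 1) (hh'h : h' * h = 1)
    -- `t` is central:
    (htc : ∀ b : B, t * b = b * t)
    -- the defining relations of `B = F[h^{±1}][x;α][y;β,δ]`:
    (hxh : x * h = t * h * x)
    (hyh : y * h = t' * h * y)
    (hyx : y * x = x * y + nceval h h' a - nceval (t * h) (t' * h') a)
    -- `B` is generated by `t, t⁻¹, h, h⁻¹, x, y`: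
    (hgen : Algebra.adjoin ℂ ({t, t', h, h', x, y} : Set B) = ⊤) :
    ∀ b : B, Commute (x * y - nceval (t * h) (t' * h') a) b :=
  xy_sub_a_th_central_general a B t t' h h' x y htt' ht't hhh' hh'h htc hxh hyh hyx hgen
end
end

section
/- The bracket on the commutative algebra ℂ[h^{±1}, x, y] defined by {x,h} = hx, {y,h} = −hy, {y,x} = −a'(h)h (extended by bilinearity and the Leibniz rule) satisfies the Jacobi identity, making ℂ[h^{±1}, x, y] a Poisson algebra. -/
/- Common setup: the Poisson generalized Weyl algebra
   `A₁ = ℂ[h^{±1},x,y]/⟨xy - a(h)⟩` with Poisson bracket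
   `{x,h} = hx`, `{y,h} = -hy`, `{y,x} = -a'(h)h`. -/

noncomputable section
open LaurentPolynomial

/-- `ℂ[h^{±1}]`, the ring of complex Laurent polynomials in `h = T 1`. -/
abbrev L : Type := LaurentPolynomial ℂ

/-- The formal derivative `a'` of a Laurent polynomial `a`. -/
def lderiv (a : L) : L := Finsupp.sum a.coeff fun n c => LaurentPolynomial.C ((n : ℂ) * c) * T (n - 1)

/-- Evaluation of a Laurent polynomial at a (nonzero) complex number `z`. -/
def leval (z : ℂ) (a : L) : ℂ := Finsupp.sum a.coeff fun n c => c * z ^ n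

/-- The Laurent polynomial `a(γ·h)`. -/
def lscale (γ : ℂ) (a : L) : L := Finsupp.sum a.coeff fun n c => LaurentPolynomial.C (c * γ ^ n) * T n

/-- The Laurent polynomial `a(γ·h⁻¹)`. -/
def lsubinv (γ : ℂ) (a : L) : L := Finsupp.sum a.coeff fun n c => LaurentPolynomial.C (c * γ ^ n) * T (-n)

/-- `B₁ = ℂ[h^{±1}, x, y]` (commutative), with `x = X 0`, `y = X 1`. -/
abbrev B1 : Type := MvPolynomial (Fin 2) L

/-- The inclusion `ℂ[h^{±1}] → ℂ[h^{±1},x,y]`. -/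
def ih : L →+* B1 := MvPolynomial.C

/-- `h ∈ B₁`. -/
def Bh : B1 := ih (T 1)
/-- `x ∈ B₁`. -/
def Bx : B1 := MvPolynomial.X 0
/-- `y ∈ B₁`. -/
def By : B1 := MvPolynomial.X 1

/-- The ideal `⟨xy - a(h)⟩` of `ℂ[h^{±1},x,y]`. -/
def GWI (a : L) : Ideal B1 := Ideal.span {Bx * By - ih a}

/-- The Poisson generalized Weyl algebra `A₁ = ℂ[h^{±1},x,y]/⟨xy - a(h)⟩`, as a
commutative ℂ-algebra. -/
abbrev GW (a : L) : Type := B1 ⧸ GWI a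

/-- The canonical projection `B₁ → A₁`. -/
def gp (a : L) : B1 →+* GW a := Ideal.Quotient.mk (GWI a)
/-- `h ∈ A₁`. -/
def gH (a : L) : GW a := gp a Bh
/-- `x ∈ A₁`. -/
def gX (a : L) : GW a := gp a Bx
/-- `y ∈ A₁`. -/
def gY (a : L) : GW a := gp a By
/-- `h^i ∈ A₁`, for `i : ℤ`. -/
def gHp (a : L) (i : ℤ) : GW a := gp a (ih (T i))

/-- `β` is a Poisson bracket on the commutative ℂ-algebra `A`: ℂ-bilinear (via
linearity in the first argument together with antisymmetry), antisymmetric,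
satisfying the Leibniz rule and the Jacobi identity. -/
def IsPoissonBracket {A : Type} [CommRing A] [Algebra ℂ A] (β : A → A → A) : Prop :=
  (∀ (r : ℂ) (u v w : A), β (r • u + v) w = r • β u w + β v w) ∧
  (∀ u v : A, β u v = - β v u) ∧
  (∀ u v w : A, β (u * v) w = u * β v w + β u w * v) ∧
  (∀ u v w : A, β u (β v w) + β v (β w u) + β w (β u v) = 0)

/-- `β` is the Poisson bracket of the Poisson generalized Weyl algebra `A₁`,
determined by `{x,h} = hx`, `{y,h} = -hy`, `{y,x} = -a'(h)h`. -/
def IsGWBracket (a : L) (β : GW a → GW a → GW a) : Prop :=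
  IsPoissonBracket β ∧
  β (gX a) (gH a) = gH a * gX a ∧
  β (gY a) (gH a) = -(gH a * gY a) ∧
  β (gY a) (gX a) = -(gp a (ih (lderiv a)) * gH a)

/-- The homogeneous component `W_k` of `A₁`: `ℂ[h^{±1}]x^k` for `k > 0`,
`ℂ[h^{±1}]` for `k = 0`, and `ℂ[h^{±1}]y^{-k}` for `k < 0`; namely the ℂ-span of
the elements `h^m x^k` (resp. `h^m`, `h^m y^{-k}`) for `m ∈ ℤ`. -/
def W (a : L) (k : ℤ) : Submodule ℂ (GW a) :=
  Submodule.span ℂ {w | ∃ m : ℤ, w = gHp a m *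
    (if 0 ≤ k then gX a ^ k.toNat else gY a ^ (-k).toNat)}

/-
The bracket is the Jacobian bracket `{u, v} = det ∂(u, v, φ)/∂(x, y, log h)` of the potential
`φ = a(h) - xy`, taken with respect to the pairwise commuting derivations `∂/∂x`, `∂/∂y` and
`h ∂/∂h`; the last one sends `φ` to `a'(h) h`, which produces `{y, x} = -a'(h) h`. A Jacobian
bracket is an antisymmetric biderivation, and when the derivations commute its Jacobiator,
expanded by the Leibniz rule, vanishes identically.
-/

section Jacobian

variable {R A : Type*} [CommRing R] [CommRing A] [Algebra R A] (D₁ D₂ D₃ : Derivation R A A)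

def jacobian (u v w : A) : A :=
  Matrix.det (Matrix.of ![![D₁ u, D₂ u, D₃ u], ![D₁ v, D₂ v, D₃ v], ![D₁ w, D₂ w, D₃ w]])

lemma jacobian_eq (u v w : A) : jacobian D₁ D₂ D₃ u v w =
    D₁ u * (D₂ v * D₃ w - D₃ v * D₂ w) - D₂ u * (D₁ v * D₃ w - D₃ v * D₁ w)
      + D₃ u * (D₁ v * D₂ w - D₂ v * D₁ w) := by
  rw [jacobian, Matrix.det_fin_three]
  simp only [Matrix.of_apply, Matrix.cons_val, Matrix.cons_val_zero, Matrix.cons_val_one]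
  ring

lemma jacobian_swap (u v w : A) : jacobian D₁ D₂ D₃ u v w = -jacobian D₁ D₂ D₃ v u w := by
  simp only [jacobian_eq]; ring

lemma jacobian_smul_add_left (r : R) (u v w φ : A) :
    jacobian D₁ D₂ D₃ (r • u + v) w φ = r • jacobian D₁ D₂ D₃ u w φ + jacobian D₁ D₂ D₃ v w φ := by
  simp only [jacobian_eq, map_add, Derivation.map_smul]
  simp only [Algebra.smul_def]
  ring

lemma jacobian_mul_left (u v w φ : A) :
    jacobian D₁ D₂ D₃ (u * v) w φ = u * jacobian D₁ D₂ D₃ v w φ + jacobian D₁ D₂ D₃ u w φ * v := by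
  simp only [jacobian_eq, Derivation.leibniz, smul_eq_mul]; ring

lemma jacobian_jacobi (h₁₂ : ∀ u, D₂ (D₁ u) = D₁ (D₂ u)) (h₁₃ : ∀ u, D₃ (D₁ u) = D₁ (D₃ u))
    (h₂₃ : ∀ u, D₃ (D₂ u) = D₂ (D₃ u)) (u v w φ : A) :
    jacobian D₁ D₂ D₃ u (jacobian D₁ D₂ D₃ v w φ) φ
      + jacobian D₁ D₂ D₃ v (jacobian D₁ D₂ D₃ w u φ) φ
      + jacobian D₁ D₂ D₃ w (jacobian D₁ D₂ D₃ u v φ) φ = 0 := by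
  simp only [jacobian_eq, map_add, map_sub, Derivation.leibniz, smul_eq_mul, h₁₂, h₁₃, h₂₃]
  ring

end Jacobian

namespace MvPolynomial

variable {R σ : Type*} [CommRing R]

lemma pderiv_pderiv_comm (i j : σ) (p : MvPolynomial σ R) :
    pderiv i (pderiv j p) = pderiv j (pderiv i p) := by
  have hcomm : ⁅pderiv i, pderiv j⁆ = (0 : Derivation R (MvPolynomial σ R) (MvPolynomial σ R)) :=
    derivation_ext fun k => by
      classical
      rw [Derivation.commutator_apply, pderiv_X, pderiv_X, Pi.single_apply, Pi.single_apply]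
      split_ifs <;> simp
  simpa [Derivation.commutator_apply, sub_eq_zero] using congrArg (· p) hcomm

end MvPolynomial

namespace Derivation
open MvPolynomial

variable {R S σ : Type*} [CommRing R] [CommRing S] [Algebra R S] (d : Derivation R S S)

def mvMapCoeffsₗ : MvPolynomial σ S →ₗ[R] MvPolynomial σ S :=
  (AddMonoidAlgebra.coeffLinearEquiv R).symm.toLinearMap ∘ₗ
    Finsupp.mapRange.linearMap d.toLinearMap ∘ₗ (AddMonoidAlgebra.coeffLinearEquiv R).toLinearMap

lemma mvMapCoeffsₗ_monomial (m : σ →₀ ℕ) (c : S) :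
    d.mvMapCoeffsₗ (monomial m c) = monomial m (d c) := by
  change AddMonoidAlgebra.ofCoeff (Finsupp.mapRange d d.map_zero (Finsupp.single m c)) = _
  rw [Finsupp.mapRange_single]
  rfl

def mvMapCoeffs : Derivation R (MvPolynomial σ S) (MvPolynomial σ S) :=
  Derivation.mk' d.mvMapCoeffsₗ fun p q => by
    induction p using MvPolynomial.induction_on' with
    | add p₁ p₂ h₁ h₂ => simp only [add_mul, map_add, h₁, h₂, add_smul, smul_add]; abel
    | monomial m c =>
      induction q using MvPolynomial.induction_on' with
      | add q₁ q₂ h₁ h₂ => simp only [mul_add, map_add, h₁, h₂, add_smul, smul_add]; abel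
      | monomial n e =>
        simp only [monomial_mul, mvMapCoeffsₗ_monomial, smul_eq_mul, leibniz, map_add, add_comm m n]

lemma mvMapCoeffs_monomial (m : σ →₀ ℕ) (c : S) :
    d.mvMapCoeffs (monomial m c) = monomial m (d c) :=
  d.mvMapCoeffsₗ_monomial m c

lemma mvMapCoeffs_C (c : S) :
    d.mvMapCoeffs (MvPolynomial.C c : MvPolynomial σ S) = MvPolynomial.C (d c) :=
  d.mvMapCoeffs_monomial 0 c

lemma mvMapCoeffs_X (i : σ) : d.mvMapCoeffs (X i : MvPolynomial σ S) = 0 := by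
  rw [X, mvMapCoeffs_monomial, map_one_eq_zero, map_zero]

lemma mvMapCoeffs_pderiv (i : σ) (p : MvPolynomial σ S) :
    d.mvMapCoeffs (pderiv i p) = pderiv i (d.mvMapCoeffs p) := by
  induction p using MvPolynomial.induction_on' with
  | add p q hp hq => simp only [map_add, hp, hq]
  | monomial m c =>
    rw [pderiv_monomial, mvMapCoeffs_monomial, mvMapCoeffs_monomial, pderiv_monomial, leibniz,
      map_natCast, smul_zero, zero_add, smul_eq_mul, mul_comm]

end Derivation

namespace LaurentPolynomial

variable {R : Type*} [CommRing R]

def eulerₗ : R[T;T⁻¹] →ₗ[R] R[T;T⁻¹] := (AddMonoidAlgebra.basis ℤ R).constr R fun n => n • T n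

lemma eulerₗ_T (n : ℤ) : eulerₗ (T n : R[T;T⁻¹]) = n • T n :=
  (AddMonoidAlgebra.basis ℤ R).constr_basis R _ n

lemma eulerₗ_C_mul_T (c : R) (n : ℤ) : eulerₗ (C c * T n) = C (n * c) * T n := by
  rw [← smul_eq_C_mul, map_smul, eulerₗ_T, smul_comm, smul_eq_C_mul, map_mul, map_intCast,
    zsmul_eq_mul]
  ring

def euler : Derivation R R[T;T⁻¹] R[T;T⁻¹] :=
  Derivation.mk' eulerₗ fun p q => by
    induction p using LaurentPolynomial.induction_on' with
    | add p₁ p₂ h₁ h₂ => simp only [add_mul, map_add, h₁, h₂, add_smul, smul_add]; abel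
    | C_mul_T n c =>
      induction q using LaurentPolynomial.induction_on' with
      | add q₁ q₂ h₁ h₂ => simp only [mul_add, map_add, h₁, h₂, add_smul, smul_add]; abel
      | C_mul_T m d =>
        have hmul : C c * T n * (C d * T m) = C (c * d) * T (n + m) := by
          rw [map_mul, T_add]; ring
        rw [hmul, eulerₗ_C_mul_T, eulerₗ_C_mul_T, eulerₗ_C_mul_T, smul_eq_mul, smul_eq_mul]
        simp only [map_mul, T_add, Int.cast_add, map_add]
        ring

lemma euler_T (n : ℤ) : euler (T n : R[T;T⁻¹]) = n • T n := eulerₗ_T n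

end LaurentPolynomial

lemma lderiv_mul_T_one (a : L) : lderiv a * T 1 = euler a := by
  change _ = (AddMonoidAlgebra.basis ℤ ℂ).constr ℂ _ a
  rw [Module.Basis.constr_apply, lderiv, Finsupp.sum_mul]
  refine Finsupp.sum_congr fun n _ => ?_
  rw [mul_assoc, ← T_add, sub_add_cancel, smul_comm, smul_eq_C_mul, zsmul_eq_mul, map_mul,
    map_intCast, mul_assoc]

namespace B1

def dX : Derivation ℂ B1 B1 := (MvPolynomial.pderiv 0).restrictScalars ℂ
def dY : Derivation ℂ B1 B1 := (MvPolynomial.pderiv 1).restrictScalars ℂ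
/-- `h ∂/∂h`, acting on coefficients. -/
def dH : Derivation ℂ B1 B1 := euler.mvMapCoeffs

lemma dY_dX (u : B1) : dY (dX u) = dX (dY u) := MvPolynomial.pderiv_pderiv_comm 1 0 u
lemma dH_dX (u : B1) : dH (dX u) = dX (dH u) := euler.mvMapCoeffs_pderiv 0 u
lemma dH_dY (u : B1) : dH (dY u) = dY (dH u) := euler.mvMapCoeffs_pderiv 1 u

lemma dX_Bx : dX Bx = 1 := MvPolynomial.pderiv_X_self 0
lemma dY_Bx : dY Bx = 0 := MvPolynomial.pderiv_X_of_ne (by decide)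
lemma dH_Bx : dH Bx = 0 := euler.mvMapCoeffs_X 0
lemma dX_By : dX By = 0 := MvPolynomial.pderiv_X_of_ne (by decide)
lemma dY_By : dY By = 1 := MvPolynomial.pderiv_X_self 1
lemma dH_By : dH By = 0 := euler.mvMapCoeffs_X 1
lemma dX_ih (p : L) : dX (ih p) = 0 := MvPolynomial.pderiv_C
lemma dY_ih (p : L) : dY (ih p) = 0 := MvPolynomial.pderiv_C
lemma dX_Bh : dX Bh = 0 := dX_ih _
lemma dY_Bh : dY Bh = 0 := dY_ih _

lemma dH_Bh : dH Bh = Bh := by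
  rw [Bh, ih, dH, Derivation.mvMapCoeffs_C, euler_T, one_zsmul]

lemma dH_ih (p : L) : dH (ih p) = ih (lderiv p) * Bh := by
  rw [Bh, ← map_mul, lderiv_mul_T_one]
  exact euler.mvMapCoeffs_C p

def bracket (a : L) (u v : B1) : B1 := jacobian dX dY dH u v (ih a - Bx * By)

end B1

/-- The bracket on `ℂ[h^{±1},x,y]` defined by `{x,h} = hx`,
`{y,h} = -hy`, `{y,x} = -a'(h)h`, extended by ℂ-bilinearity and the Leibniz rule,
satisfies the Jacobi identity, making `ℂ[h^{±1},x,y]` a Poisson algebra. -/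
theorem bracket_on_B1_is_poisson (a : L) :
    ∃ β : B1 → B1 → B1,
      (∀ (r : ℂ) (u v w : B1), β (r • u + v) w = r • β u w + β v w) ∧
      (∀ u v : B1, β u v = - β v u) ∧
      (∀ u v w : B1, β (u * v) w = u * β v w + β u w * v) ∧
      β Bx Bh = Bh * Bx ∧
      β By Bh = -(Bh * By) ∧
      β By Bx = -(ih (lderiv a) * Bh) ∧
      (∀ u v w : B1, β u (β v w) + β v (β w u) + β w (β u v) = 0) := by
  open B1 in
  refine ⟨bracket a, fun r u v w => jacobian_smul_add_left _ _ _ r u v w _,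
    fun u v => jacobian_swap _ _ _ u v _, fun u v w => jacobian_mul_left _ _ _ u v w _, ?_, ?_, ?_,
    fun u v w => jacobian_jacobi _ _ _ dY_dX dH_dX dH_dY u v w _⟩
  all_goals
    simp only [bracket, jacobian_eq, map_sub, Derivation.leibniz, smul_eq_mul, dX_Bx, dY_Bx,
      dH_Bx, dX_By, dY_By, dH_By, dX_Bh, dY_Bh, dH_Bh, dX_ih, dY_ih, dH_ih]
    ring
end
end
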